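/- (Two-dimensional form of the Günter derivative matrix.) Let u : ℝ³ → ℝ³ be differentiable with ∂_{x_3}u ≡ 0 (u independent of x₃), and let n ∈ ℝ³ with n₃ = 0, τ = (−n₂, n₁, 0). Then at every point the Günter derivative matrix satisfies M^(n)u = ∇u n − n(∇·u) = e₃ × ∂_τ u, where ∂_τ u is the vector with components Σ_{j=1}^{3} τ_j ∂_{x_j}u_i. -/

import Mathlib

open Matrix

/-- The canonical basis vector `e i` of `ℝ³`. -/
noncomputable def e (i : Fin 3) : Fin 3 → ℝ := Pi.single i 1

/-- The partial derivative `∂_{x_i} u_j (x)` of a vector field `u : ℝ³ → ℝ³`. -/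
noncomputable def pd (u : (Fin 3 → ℝ) → (Fin 3 → ℝ)) (x : Fin 3 → ℝ) (i j : Fin 3) : ℝ :=
  fderiv ℝ u x (e i) j

/-- The gradient matrix `(∇u)_{ij} = ∂_{x_i} u_j (x)`. -/
noncomputable def gradMatrix (u : (Fin 3 → ℝ) → (Fin 3 → ℝ)) (x : Fin 3 → ℝ) :
    Matrix (Fin 3) (Fin 3) ℝ :=
  Matrix.of fun i j => pd u x i j

/-- The divergence `∇ · u` of a vector field `u : ℝ³ → ℝ³` at `x`. -/
noncomputable def divg (u : (Fin 3 → ℝ) → (Fin 3 → ℝ)) (x : Fin 3 → ℝ) : ℝ :=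
  ∑ j, pd u x j j

/-- The Günter derivative matrix applied to `u`:
`(M^(n) u)_i = ∑ j (n_j ∂_{x_i} u_j − n_i ∂_{x_j} u_j)`. -/
noncomputable def gunterMatrix (n : Fin 3 → ℝ) (u : (Fin 3 → ℝ) → (Fin 3 → ℝ))
    (x : Fin 3 → ℝ) : Fin 3 → ℝ :=
  fun i => ∑ j, (n j * pd u x i j - n i * pd u x j j)

/-- The directional derivative `∂_τ u`, with components `∑ j τ_j ∂_{x_j} u_i`. -/
noncomputable def dirDeriv (τ : Fin 3 → ℝ) (u : (Fin 3 → ℝ) → (Fin 3 → ℝ))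
    (x : Fin 3 → ℝ) : Fin 3 → ℝ :=
  fun i => ∑ j, τ j * pd u x j i

/-! Both identities are pointwise linear algebra in the matrix `G = ∇u(x)`. The first,
`M^(n)u = G n − (tr G) n`, holds for every `u` and `n`. For the second, independence of `x₃`
makes the last row of `G` vanish; together with `n₃ = 0` only the upper-left `2 × 2` block of `G`
and the first two entries of `n` remain, and comparing entries with `e₃ × v = (−v₂, v₁, 0)` for
`v = τᵀ G` is a direct computation. -/

section LinearAlgebra

variable {R : Type*} [CommRing R]

theorem single_two_cross (v : Fin 3 → R) : Pi.single 2 1 ⨯₃ v = ![-v 1, v 0, 0] := by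
  simp [cross_apply]

theorem mulVec_sub_trace_smul_eq_single_two_cross_vecMul {G : Matrix (Fin 3) (Fin 3) R}
    {n : Fin 3 → R} (hG : G 2 = 0) (hn : n 2 = 0) :
    G *ᵥ n - G.trace • n = Pi.single 2 1 ⨯₃ (![-n 1, n 0, 0] ᵥ* G) := by
  have hG' : ∀ j, G 2 j = 0 := congrFun hG
  rw [single_two_cross]
  ext i
  fin_cases i <;>
    simp only [Fin.zero_eta, Fin.mk_one, Fin.reduceFinMk, Pi.sub_apply, Pi.smul_apply,
      smul_eq_mul, mulVec, vecMul, dotProduct, trace, diag_apply, Fin.sum_univ_three, hn, hG',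
      cons_val_zero, cons_val_one, cons_val] <;> ring

end LinearAlgebra

theorem gradMatrix_row_eq_zero {u : (Fin 3 → ℝ) → (Fin 3 → ℝ)} {x : Fin 3 → ℝ} {k : Fin 3}
    (h : fderiv ℝ u x (e k) = 0) : gradMatrix u x k = 0 := by
  ext j
  simp [gradMatrix, pd, h]

section VectorCalculus

variable (u : (Fin 3 → ℝ) → (Fin 3 → ℝ)) (x : Fin 3 → ℝ)

theorem divg_eq_trace_gradMatrix : divg u x = (gradMatrix u x).trace := rfl

theorem dirDeriv_eq_vecMul_gradMatrix (τ : Fin 3 → ℝ) : dirDeriv τ u x = τ ᵥ* gradMatrix u x :=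
  rfl

theorem gunterMatrix_eq_gradMatrix_mulVec_sub_divg_smul (n : Fin 3 → ℝ) :
    gunterMatrix n u x = gradMatrix u x *ᵥ n - divg u x • n := by
  ext i
  simp only [gunterMatrix, Finset.sum_sub_distrib, Finset.sum_mul, Pi.sub_apply, mulVec,
    dotProduct, gradMatrix, of_apply, Pi.smul_apply, smul_eq_mul, divg, mul_comm (n _)]

end VectorCalculus

/-- Zero-based indices: `x₃ ↔ index 2`. -/
theorem gunterMatrix_two_dimensional_general (u : (Fin 3 → ℝ) → (Fin 3 → ℝ))
    (hu3 : ∀ x, fderiv ℝ u x (e 2) = 0)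
    (n : Fin 3 → ℝ) (hn3 : n 2 = 0) :
    ∀ x : Fin 3 → ℝ,
      gunterMatrix n u x = gradMatrix u x *ᵥ n - divg u x • n ∧
      gunterMatrix n u x = e 2 ⨯₃ dirDeriv ![-n 1, n 0, 0] u x := by
  intro x
  have hM := gunterMatrix_eq_gradMatrix_mulVec_sub_divg_smul u x n
  refine ⟨hM, ?_⟩
  rw [hM, divg_eq_trace_gradMatrix, dirDeriv_eq_vecMul_gradMatrix]
  exact mulVec_sub_trace_smul_eq_single_two_cross_vecMul (gradMatrix_row_eq_zero (hu3 x)) hn3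

/-- Two-dimensional form of the Günter derivative matrix:
for `u` independent of `x₃` and `n` with `n₃ = 0`,
`M^(n)u = ∇u n − n(∇·u) = e₃ × ∂_τ u` with `τ = (−n₂, n₁, 0)`.
(Zero-based indices: `x₃ ↔ index 2`.) -/
theorem gunterMatrix_two_dimensional (u : (Fin 3 → ℝ) → (Fin 3 → ℝ))
    (hu : Differentiable ℝ u) (hu3 : ∀ x, fderiv ℝ u x (e 2) = 0)
    (n : Fin 3 → ℝ) (hn3 : n 2 = 0) :
    ∀ x : Fin 3 → ℝ,
      gunterMatrix n u x = gradMatrix u x *ᵥ n - divg u x • n ∧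
      gunterMatrix n u x = e 2 ⨯₃ dirDeriv ![-n 1, n 0, 0] u x :=
  gunterMatrix_two_dimensional_general u hu3 n hn3
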